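/- arXiv:1602.00936 — 2 statements merged into one kernel-verified Lean document; each statement's English description precedes it below -/
import Mathlib

section
/- Let S' be a paracell in X and let I_1,...,I_N be an enumeration of all elements of S'. Then in the algebra A(X), the product (1−Î_1)···(1−Î_N) is independent of the chosen ordering: for every permutation π of (1,...,N), (1−Î_1)···(1−Î_N) = (1−Î_{π(1)})···(1−Î_{π(N)}). -/
/-!
Write `g I = 1 - Î`. A direct computation gives `g I * g J - g J * g I = Î * Ĵ - Ĵ * Î`, which
vanishes when `I ⊆ J`. For `K = I ∩ J` or `K = I ∪ J` (one of them lies in `S'`, so `g K` is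
among the factors), every block of a sequence occurring in `Î * Ĵ` or `Ĵ * Î` lies inside `K` or
outside it; such sequences are fixed by left multiplication by `{X}` and by `K̂`, and this
property survives multiplication by anything on either side. Hence
`g K * x * (g I * g J - g J * g I) * y = 0`, so adjacent incomparable factors `g I`, `g J` may be
swapped as soon as `g K` occurs to their left. If `g K` occurs only to their right, move it next
to them (by induction on the length of the tail); since `K` is comparable with `I` and `J`,
`g I * g J * g K = g K * g I * g J = g K * g J * g I = g J * g I * g K`.
-/

open scoped Classical

namespace GRF

variable {α : Type*} [DecidableEq α]

/-- `J` is a proper (nonempty, not everything) subset of `X`. -/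
def IsProperSubset (X J : Finset α) : Prop := J ⊆ X ∧ J ≠ ∅ ∧ J ≠ X

/-- A proper sequence in `P(X)`: a nonempty list of pairwise disjoint nonempty
subsets of `X` with union `X`. -/
def IsProperSeq (X : Finset α) (c : List (Finset α)) : Prop :=
  c ≠ [] ∧ (∀ J ∈ c, J ≠ ∅) ∧ List.Pairwise (fun I J => I ∩ J = ∅) c ∧
    c.foldr (· ∪ ·) ∅ = X

/-- The product of two sequences: all `A_i ∩ B_j`, ordered first by `j` then by `i`,
with empty intersections deleted. -/
noncomputable def seqMul (a b : List (Finset α)) : List (Finset α) :=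
  ((b.map fun B => a.map fun A => A ∩ B).flatten).filter fun J => J ≠ ∅

/-- The set `S' = {J ⊆ X : X \ J ∈ S}` opposite to `S`. -/
def opp (X : Finset α) (S : Set (Finset α)) : Set (Finset α) :=
  {J | J ⊆ X ∧ X \ J ∈ S}

/-- A paracell associated to `X`. -/
def IsParacell (X : Finset α) (S : Set (Finset α)) : Prop :=
  S.Nonempty ∧ (∀ J ∈ S, IsProperSubset X J) ∧
    ∀ I ∈ S, ∀ J ∈ S, I ∩ J ∈ S ∨ I ∪ J ∈ S

/-- A precell associated to `X`. -/
def IsPrecell (X : Finset α) (S : Set (Finset α)) : Prop :=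
  IsParacell X S ∧ ∀ J : Finset α, IsProperSubset X J → J ∈ S ∨ X \ J ∈ S

/-- A cell associated to `X`: a precell admitting real weights with zero total sum,
positive on all members of the cell. -/
def IsCell (X : Finset α) (S : Set (Finset α)) : Prop :=
  IsPrecell X S ∧ ∃ s : α → ℝ,
    (∑ j ∈ X, s j) = 0 ∧ ∀ J ∈ S, 0 < ∑ j ∈ J, s j

/-- `Y ↓ S` for `S` a paracell associated to `X`. -/
def cellDown (Y X : Finset α) (S : Set (Finset α)) : Set (Finset α) :=
  {J | IsProperSubset (Y ∪ X) J ∧ (J ∩ X = X ∨ J ∩ X ∈ S)}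

/-- `Y ↑ S'` for `S'` a paracell associated to `X`. -/
def cellUp (Y X : Finset α) (S : Set (Finset α)) : Set (Finset α) :=
  {J | IsProperSubset (Y ∪ X) J ∧ (J ∩ X = ∅ ∨ J ∩ X ∈ S)}

/-- `Y ↓ j` for a single index `j`. -/
def ptDown (Y : Finset α) (j : α) : Set (Finset α) :=
  {J | IsProperSubset (insert j Y) J ∧ j ∈ J}

/-- `Y ↑ j` for a single index `j`. -/
def ptUp (Y : Finset α) (j : α) : Set (Finset α) :=
  {J | IsProperSubset (insert j Y) J ∧ j ∉ J}

/-- The underlying vector space of the algebra `A(X)`: formal complex linear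
combinations of sequences of subsets. -/
abbrev AX (α : Type*) [DecidableEq α] : Type _ := (List (Finset α)) →₀ ℂ

/-- The multiplication of `A(X)`, extending `seqMul` bilinearly. -/
noncomputable def amul (x y : AX α) : AX α :=
  x.sum fun a ca => y.sum fun b cb => Finsupp.single (seqMul a b) (ca * cb)

/-- The unit `{X}` of `A(X)`. -/
noncomputable def oneA (X : Finset α) : AX α := Finsupp.single [X] 1

/-- `Î = {I, X \ I}` as an element of `A(X)`. -/
noncomputable def hatI (X I : Finset α) : AX α := Finsupp.single [I, X \ I] 1

/-- Product of a list of elements of `A(X)` (with unit `{X}`). -/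
noncomputable def aprod (X : Finset α) (l : List (AX α)) : AX α :=
  l.foldr amul (oneA X)

/-- A `ν`-chain associated to `S'`: a proper sequence all of whose proper initial
partial unions lie in `S'`. -/
def IsChainFor (X : Finset α) (S' : Set (Finset α)) (c : List (Finset α)) : Prop :=
  IsProperSeq X c ∧
    ∀ r : ℕ, 0 < r → r < c.length → ((c.take r).foldr (· ∪ ·) ∅) ∈ S'

lemma IsProperSeq.nodup {X : Finset α} {c : List (Finset α)}
    (h : IsProperSeq X c) : c.Nodup := by
  obtain ⟨-, hne, hpw, -⟩ := h
  refine List.Pairwise.imp_of_mem ?_ hpw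
  intro a b ha _ hab
  intro h'
  subst h'
  exact hne a ha (by simpa using hab)

/-- `U_S = Σ_ν Σ_{ν-chains for S'} (−1)^{ν−1} {J_1,…,J_ν}`, as a function of the
opposite paracell `S'`. -/
noncomputable def US [Fintype α] (X : Finset α) (S' : Set (Finset α)) : AX α :=
  Finsupp.ofSupportFinite
    (fun c => if IsChainFor X S' c then (-1 : ℂ) ^ (c.length - 1) else 0)
    (Set.Finite.subset
      (List.finite_length_le (Finset α) (Fintype.card (Finset α)))
      (by
        intro c hc
        have h : IsChainFor X S' c := by
          by_contra h
          simp [Function.mem_support, h] at hc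
        exact h.1.nodup.length_le_card))

/-- The underlying vector space of `A(A∪{1}) ⊗ A(B∪{1})`. -/
abbrev AX2 (α : Type*) [DecidableEq α] : Type _ :=
  (List (Finset α) × List (Finset α)) →₀ ℂ

/-- The multiplication of the tensor product algebra. -/
noncomputable def tmul (x y : AX2 α) : AX2 α :=
  x.sum fun a ca => y.sum fun b cb =>
    Finsupp.single (seqMul a.1 b.1, seqMul a.2 b.2) (ca * cb)

/-- The tensor `u ⊗ v` of two elements of `A(A∪{1})` and `A(B∪{1})`. -/
noncomputable def tens (u v : AX α) : AX2 α :=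
  u.sum fun a ca => v.sum fun b cb => Finsupp.single (a, b) (ca * cb)

/-- The pair `(c_A, c_B)` of traces of a sequence `c` on `A∪{1}` and `B∪{1}`,
with empty sets deleted. -/
noncomputable def facSeq (A1 B1 : Finset α) (c : List (Finset α)) :
    List (Finset α) × List (Finset α) :=
  ((c.map fun J => J ∩ A1).filter fun J => J ≠ ∅,
   (c.map fun J => J ∩ B1).filter fun J => J ≠ ∅)

/-- The factorization map `Fac : A(X) → A(A∪{1}) ⊗ A(B∪{1})`. -/
noncomputable def Fac (A1 B1 : Finset α) (x : AX α) : AX2 α :=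
  x.sum fun c cc => Finsupp.single (facSeq A1 B1 c) cc

/-- The paracell `(S‖1,A)` built from opposite paracells `S`, `S'` relative to
`X = A ∪ B ∪ {o}`. -/
def restCell (A : Finset α) (o : α) (S S' : Set (Finset α)) : Set (Finset α) :=
  {J | IsProperSubset (insert o A) J ∧
    ((J ⊆ A ∧ J ∈ S) ∨ (o ∈ J ∧ A \ J ∈ S'))}

open MonoidAlgebra

lemma _root_.List.filter_map_filter_of_imp {β : Type*} (p : β → Bool) (f : β → β)
    (hf : ∀ x, p (f x) → p x) (l : List β) :
    ((l.filter p).map f).filter p = (l.map f).filter p := by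
  rw [List.filter_map, List.filter_map, List.filter_filter]
  congr 2
  funext x
  cases h : p (f x) <;> simp [hf x, h]

lemma _root_.List.flatMap_filter_of_eq_nil {β γ : Type*} (p : β → Bool) (f : β → List γ)
    (hf : ∀ x, p x = false → f x = []) (l : List β) :
    (l.filter p).flatMap f = l.flatMap f := by
  induction l with
  | nil => rfl
  | cons x l ih => cases h : p x <;> simp [h, hf x, ih]

lemma _root_.mul_mul_eq_of_commute_of_mul_sub_eq_zero {R : Type*} [NonUnitalRing R] {a b c : R}
    (ha : Commute a c) (hb : Commute b c) (h : c * (a * b - b * a) = 0) :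
    a * b * c = b * a * c := by
  rw [(ha.mul_left hb).eq, (hb.mul_left ha).eq, ← sub_eq_zero, ← mul_sub, h]

lemma _root_.MonoidAlgebra.single_one_mul_of_mem_supported {R M : Type*} [CommSemiring R] [Mul M]
    {s : Set M} {a : M} (h : ∀ m ∈ s, a * m = m) {x : MonoidAlgebra R M}
    (hx : x ∈ supported R R s) : single a 1 * x = x := by
  rw [supported_eq_span_single] at hx
  induction hx using Submodule.span_induction with
  | mem y hy =>
    obtain ⟨m, hm, rfl⟩ := hy
    rw [single_mul_single, h m hm, one_mul]
  | zero => exact mul_zero _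
  | add y z _ _ hy hz => rw [mul_add, hy, hz]
  | smul r y _ hy => rw [mul_smul_comm, hy]

def rawSeqMul (a b : List (Finset α)) : List (Finset α) :=
  b.flatMap fun B => a.map (· ∩ B)

lemma seqMul_eq_filter_rawSeqMul (a b : List (Finset α)) :
    seqMul a b = (rawSeqMul a b).filter fun J => J ≠ ∅ := by
  simp [seqMul, rawSeqMul, List.flatMap]

lemma rawSeqMul_assoc (a b c : List (Finset α)) :
    rawSeqMul (rawSeqMul a b) c = rawSeqMul a (rawSeqMul b c) := by
  simp [rawSeqMul, List.map_flatMap, List.flatMap_assoc, List.flatMap_map, Function.comp_def,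
    Finset.inter_assoc]

lemma filter_rawSeqMul_filter_left (a b : List (Finset α)) :
    (rawSeqMul (a.filter fun J => J ≠ ∅) b).filter (fun J => J ≠ ∅) =
      (rawSeqMul a b).filter fun J => J ≠ ∅ := by
  simp only [rawSeqMul, List.filter_flatMap]
  congr 1
  funext B
  refine List.filter_map_filter_of_imp _ _ (fun A h => ?_) a
  simp only [ne_eq, decide_eq_true_eq] at h ⊢
  rintro rfl
  simp at h

lemma filter_rawSeqMul_filter_right (a b : List (Finset α)) :
    (rawSeqMul a (b.filter fun J => J ≠ ∅)).filter (fun J => J ≠ ∅) =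
      (rawSeqMul a b).filter fun J => J ≠ ∅ := by
  simp only [rawSeqMul, List.filter_flatMap]
  exact List.flatMap_filter_of_eq_nil _ _ (fun B hB => by simp_all) b

lemma seqMul_assoc (a b c : List (Finset α)) :
    seqMul (seqMul a b) c = seqMul a (seqMul b c) := by
  simp only [seqMul_eq_filter_rawSeqMul, filter_rawSeqMul_filter_left,
    filter_rawSeqMul_filter_right, rawSeqMul_assoc]

lemma seqMul_eq_self_of_forall {a c : List (Finset α)}
    (h : ∀ B ∈ c, (a.map (· ∩ B)).filter (fun J => J ≠ ∅) = [B]) : seqMul a c = c := by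
  rw [seqMul_eq_filter_rawSeqMul, rawSeqMul, List.filter_flatMap, List.flatMap_congr h]
  exact List.flatMap_singleton' c

lemma mem_seqMul {a b : List (Finset α)} {E : Finset α} (h : E ∈ seqMul a b) :
    E ≠ ∅ ∧ ∃ A ∈ a, ∃ B ∈ b, E = A ∩ B := by
  simp only [seqMul_eq_filter_rawSeqMul, rawSeqMul, List.mem_filter, List.mem_flatMap,
    List.mem_map, decide_eq_true_eq] at h
  obtain ⟨⟨B, hB, A, hA, rfl⟩, hE⟩ := h
  exact ⟨hE, A, hA, B, hB, rfl⟩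

def IsSplitBy (X K : Finset α) (c : List (Finset α)) : Prop :=
  ∀ B ∈ c, B ≠ ∅ ∧ B ⊆ X ∧ (B ⊆ K ∨ Disjoint B K)

lemma IsSplitBy.seqMul_left {X K : Finset α} {b : List (Finset α)} (h : IsSplitBy X K b)
    (a : List (Finset α)) : IsSplitBy X K (seqMul a b) := by
  intro E hE
  obtain ⟨hE, A, -, B, hB, rfl⟩ := mem_seqMul hE
  obtain ⟨-, hBX, hBK | hBK⟩ := h B hB
  · exact ⟨hE, Finset.inter_subset_right.trans hBX, .inl (Finset.inter_subset_right.trans hBK)⟩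
  · exact ⟨hE, Finset.inter_subset_right.trans hBX, .inr (hBK.mono_left Finset.inter_subset_right)⟩

lemma IsSplitBy.seqMul_right {X K : Finset α} {a : List (Finset α)} (h : IsSplitBy X K a)
    (b : List (Finset α)) : IsSplitBy X K (seqMul a b) := by
  intro E hE
  obtain ⟨hE, A, hA, B, -, rfl⟩ := mem_seqMul hE
  obtain ⟨-, hAX, hAK | hAK⟩ := h A hA
  · exact ⟨hE, Finset.inter_subset_left.trans hAX, .inl (Finset.inter_subset_left.trans hAK)⟩
  · exact ⟨hE, Finset.inter_subset_left.trans hAX, .inr (hAK.mono_left Finset.inter_subset_left)⟩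

lemma seqMul_single_of_isSplitBy {X K : Finset α} {c : List (Finset α)} (h : IsSplitBy X K c) :
    seqMul [X] c = c := by
  refine seqMul_eq_self_of_forall fun B hB => ?_
  obtain ⟨hB, hBX, -⟩ := h B hB
  simp [Finset.inter_eq_right.mpr hBX, hB]

lemma seqMul_hat_of_isSplitBy {X K : Finset α} {c : List (Finset α)} (h : IsSplitBy X K c) :
    seqMul [K, X \ K] c = c := by
  refine seqMul_eq_self_of_forall fun B hB => ?_
  obtain ⟨hB, hBX, hBK | hBK⟩ := h B hB
  · have : (X \ K) ∩ B = ∅ := by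
      rw [← Finset.disjoint_iff_inter_eq_empty]
      exact Finset.sdiff_disjoint.mono_right hBK
    simp [Finset.inter_eq_right.mpr hBK, this, hB]
  · have : (X \ K) ∩ B = B := Finset.inter_eq_right.mpr (Finset.subset_sdiff.mpr ⟨hBX, hBK⟩)
    simp [Finset.disjoint_iff_inter_eq_empty.mp hBK.symm, this, hB]

lemma IsProperSubset.sdiff_ne_empty {X I : Finset α} (hI : IsProperSubset X I) : X \ I ≠ ∅ := by
  rw [Ne, Finset.sdiff_eq_empty_iff_subset]
  exact fun h => hI.2.2 (hI.1.antisymm h)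

lemma IsProperSubset.isSplitBy_hat {X I : Finset α} (hI : IsProperSubset X I) :
    IsSplitBy X I [I, X \ I] := by
  simp only [IsSplitBy, List.mem_cons, List.not_mem_nil, or_false, forall_eq_or_imp, forall_eq]
  exact ⟨⟨hI.2.1, hI.1, .inl subset_rfl⟩, hI.sdiff_ne_empty, Finset.sdiff_subset,
    .inr Finset.sdiff_disjoint⟩

lemma seqMul_hat_single {X I : Finset α} (hI : IsProperSubset X I) :
    seqMul [I, X \ I] [X] = [I, X \ I] := by
  simp [seqMul, Finset.inter_eq_left.mpr hI.1, Finset.inter_eq_left.mpr Finset.sdiff_subset, hI.2.1,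
    hI.sdiff_ne_empty]

lemma seqMul_hat_comm_of_subset {X I J : Finset α} (hIJ : I ⊆ J) :
    seqMul [I, X \ I] [J, X \ J] = seqMul [J, X \ J] [I, X \ I] := by
  have h₁ : I ∩ (X \ J) = ∅ := by
    rw [← Finset.disjoint_iff_inter_eq_empty]; exact Finset.disjoint_sdiff.mono_left hIJ
  have h₂ : (X \ J) ∩ I = ∅ := by rw [Finset.inter_comm, h₁]
  simp [seqMul, h₁, h₂, Finset.inter_eq_left.mpr hIJ, Finset.inter_eq_right.mpr hIJ,
    Finset.inter_comm (X \ I) J, Finset.inter_comm (X \ J) (X \ I), List.filter_cons]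

lemma IsSplitBy.seqMul_inter_union {X I J : Finset α} {a b : List (Finset α)}
    (ha : IsSplitBy X I a) (hb : IsSplitBy X J b) :
    IsSplitBy X (I ∩ J) (seqMul a b) ∧ IsSplitBy X (I ∪ J) (seqMul a b) := by
  refine ⟨fun E hE => ?_, fun E hE => ?_⟩ <;>
  · obtain ⟨hE, A, hA, B, hB, rfl⟩ := mem_seqMul hE
    obtain ⟨-, hAX, hAI⟩ := ha A hA
    obtain ⟨-, -, hBJ⟩ := hb B hB
    refine ⟨hE, Finset.inter_subset_left.trans hAX, ?_⟩
    simp only [Finset.subset_iff, Finset.disjoint_left, Finset.mem_inter, Finset.mem_union] at *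
    grind

lemma isSplitBy_seqMul_hat {X I J K : Finset α} (hI : IsProperSubset X I)
    (hJ : IsProperSubset X J) (hK : K = I ∩ J ∨ K = I ∪ J) :
    IsSplitBy X K (seqMul [I, X \ I] [J, X \ J]) := by
  have h := hI.isSplitBy_hat.seqMul_inter_union hJ.isSplitBy_hat
  rcases hK with rfl | rfl
  exacts [h.1, h.2]

noncomputable instance : Semigroup (List (Finset α)) where
  mul := seqMul
  mul_assoc := seqMul_assoc

lemma seq_mul_eq_seqMul (a b : List (Finset α)) : a * b = seqMul a b := rfl

/-- `A(X)` lives inside this algebra; it has no unit since `[X]` is neutral only for sequences of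
nonempty subsets of `X`. -/
abbrev SeqAlg (α : Type*) [DecidableEq α] : Type _ := MonoidAlgebra ℂ (List (Finset α))

lemma ofCoeff_amul (x y : AX α) : ofCoeff (amul x y) = ofCoeff x * ofCoeff y := by
  rw [mul_def, amul]
  simp only [← ofCoeff_single, ← ofCoeff_finsuppSum]
  rfl

noncomputable def splitSupported (X K : Finset α) : Submodule ℂ (SeqAlg α) :=
  supported ℂ ℂ {c | IsSplitBy X K c}

lemma single_mem_splitSupported {X K : Finset α} {c : List (Finset α)} (hc : IsSplitBy X K c)
    (r : ℂ) : single c r ∈ splitSupported X K := by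
  rw [splitSupported, mem_supported, coeff_single]
  exact (Finset.coe_subset.mpr Finsupp.support_single_subset).trans (by simpa using hc)

lemma mul_mem_splitSupported_left {X K : Finset α} (x : SeqAlg α) {y : SeqAlg α}
    (hy : y ∈ splitSupported X K) : x * y ∈ splitSupported X K := by
  intro c hc
  obtain ⟨a, -, b, hb, rfl⟩ := Finset.mem_mul.mp (support_coeff_mul_subset x y hc)
  exact IsSplitBy.seqMul_left (hy hb) a

lemma mul_mem_splitSupported_right {X K : Finset α} {x : SeqAlg α}
    (hx : x ∈ splitSupported X K) (y : SeqAlg α) : x * y ∈ splitSupported X K := by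
  intro c hc
  obtain ⟨a, ha, b, -, rfl⟩ := Finset.mem_mul.mp (support_coeff_mul_subset x y hc)
  exact IsSplitBy.seqMul_right (hx ha) b

noncomputable def blockOne (X : Finset α) : SeqAlg α := single [X] 1

noncomputable def blockHat (X I : Finset α) : SeqAlg α := single [I, X \ I] 1

noncomputable def gen (X I : Finset α) : SeqAlg α := blockOne X - blockHat X I

lemma blockOne_mul {X K : Finset α} {x : SeqAlg α} (hx : x ∈ splitSupported X K) :
    blockOne X * x = x :=
  single_one_mul_of_mem_supported (fun _ hc => seqMul_single_of_isSplitBy hc) hx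

lemma blockHat_mul {X K : Finset α} {x : SeqAlg α} (hx : x ∈ splitSupported X K) :
    blockHat X K * x = x :=
  single_one_mul_of_mem_supported (fun _ hc => seqMul_hat_of_isSplitBy hc) hx

lemma gen_mul_eq_zero {X K : Finset α} {x : SeqAlg α} (hx : x ∈ splitSupported X K) :
    gen X K * x = 0 := by
  rw [gen, sub_mul, blockOne_mul hx, blockHat_mul hx, sub_self]

lemma blockHat_mem_splitSupported {X I : Finset α} (hI : IsProperSubset X I) :
    blockHat X I ∈ splitSupported X I :=
  single_mem_splitSupported hI.isSplitBy_hat 1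

lemma blockHat_mul_blockOne {X I : Finset α} (hI : IsProperSubset X I) :
    blockHat X I * blockOne X = blockHat X I := by
  rw [blockHat, blockOne, single_mul_single, mul_one, seq_mul_eq_seqMul, seqMul_hat_single hI]

lemma gen_mul_gen_sub_gen_mul_gen {X I J : Finset α} (hI : IsProperSubset X I)
    (hJ : IsProperSubset X J) :
    gen X I * gen X J - gen X J * gen X I =
      blockHat X I * blockHat X J - blockHat X J * blockHat X I := by
  simp only [gen, sub_mul, mul_sub, blockHat_mul_blockOne hI, blockHat_mul_blockOne hJ,
    blockOne_mul (blockHat_mem_splitSupported hI), blockOne_mul (blockHat_mem_splitSupported hJ)]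
  abel

lemma commute_gen_of_subset {X I J : Finset α} (hI : IsProperSubset X I)
    (hJ : IsProperSubset X J) (hIJ : I ⊆ J) : Commute (gen X I) (gen X J) := by
  rw [commute_iff_eq, ← sub_eq_zero, gen_mul_gen_sub_gen_mul_gen hI hJ, sub_eq_zero, blockHat,
    blockHat, single_mul_single, single_mul_single, seq_mul_eq_seqMul, seq_mul_eq_seqMul,
    seqMul_hat_comm_of_subset hIJ]

lemma gen_commutator_mem_splitSupported {X I J K : Finset α} (hI : IsProperSubset X I)
    (hJ : IsProperSubset X J) (hK : K = I ∩ J ∨ K = I ∪ J) :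
    gen X I * gen X J - gen X J * gen X I ∈ splitSupported X K := by
  have hK' : K = J ∩ I ∨ K = J ∪ I := by rwa [Finset.inter_comm, Finset.union_comm]
  rw [gen_mul_gen_sub_gen_mul_gen hI hJ, blockHat, blockHat, single_mul_single,
    single_mul_single]
  exact sub_mem (single_mem_splitSupported (isSplitBy_seqMul_hat hI hJ hK) _)
    (single_mem_splitSupported (isSplitBy_seqMul_hat hJ hI hK') _)

noncomputable def genMul (X : Finset α) (u : List (Finset α)) (z : SeqAlg α) : SeqAlg α :=
  u.foldr (fun I y => gen X I * y) z

noncomputable def genProd (X : Finset α) (l : List (Finset α)) : SeqAlg α :=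
  genMul X l (blockOne X)

lemma genMul_cons (X I : Finset α) (u : List (Finset α)) (z : SeqAlg α) :
    genMul X (I :: u) z = gen X I * genMul X u z := rfl

lemma genMul_append (X : Finset α) (u w : List (Finset α)) (z : SeqAlg α) :
    genMul X (u ++ w) z = genMul X u (genMul X w z) :=
  List.foldr_append

lemma genMul_sub (X : Finset α) (u : List (Finset α)) (y z : SeqAlg α) :
    genMul X u y - genMul X u z = genMul X u (y - z) := by
  induction u with
  | nil => rfl
  | cons I u ih => rw [genMul_cons, genMul_cons, genMul_cons, ← ih, mul_sub]

lemma genMul_mem_splitSupported {X K : Finset α} (u : List (Finset α)) {z : SeqAlg α}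
    (hz : z ∈ splitSupported X K) : genMul X u z ∈ splitSupported X K := by
  induction u with
  | nil => exact hz
  | cons I u ih => exact mul_mem_splitSupported_left _ ih

lemma genProd_cons (X I : Finset α) (l : List (Finset α)) :
    genProd X (I :: l) = gen X I * genProd X l := rfl

lemma genProd_append (X : Finset α) (u w : List (Finset α)) :
    genProd X (u ++ w) = genMul X u (genProd X w) :=
  genMul_append X u w _

lemma ofCoeff_aprod (X : Finset α) (l : List (Finset α)) :
    ofCoeff (aprod X (l.map fun I => oneA X - hatI X I)) = genProd X l := by
  induction l with
  | nil => rfl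
  | cons I l ih =>
    rw [List.map_cons, aprod, List.foldr_cons, ofCoeff_amul, ← aprod, ih]
    rfl

lemma genProd_swap_of_commute {X I J : Finset α} (h : Commute (gen X I) (gen X J))
    (u v : List (Finset α)) : genProd X (u ++ I :: J :: v) = genProd X (u ++ J :: I :: v) := by
  rw [genProd_append, genProd_append, genProd_cons, genProd_cons, genProd_cons, genProd_cons,
    ← mul_assoc, ← mul_assoc, h.eq]

lemma genProd_swap_of_witness_before {X I J K : Finset α} (hI : IsProperSubset X I)
    (hJ : IsProperSubset X J) (hK : K = I ∩ J ∨ K = I ∪ J) (u₁ u₂ v : List (Finset α)) :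
    genProd X ((u₁ ++ K :: u₂) ++ I :: J :: v) = genProd X ((u₁ ++ K :: u₂) ++ J :: I :: v) := by
  rw [genProd_append, genProd_append, genMul_append, genMul_append, genMul_cons, genMul_cons]
  congr 1
  rw [← sub_eq_zero, ← mul_sub, genMul_sub]
  refine gen_mul_eq_zero (genMul_mem_splitSupported u₂ ?_)
  rw [genProd_cons, genProd_cons, genProd_cons, genProd_cons, ← mul_assoc, ← mul_assoc, ← sub_mul]
  exact mul_mem_splitSupported_right (gen_commutator_mem_splitSupported hI hJ hK) _

lemma genProd_swap_of_witness_after {X I J K : Finset α} (hI : IsProperSubset X I)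
    (hJ : IsProperSubset X J) (hK' : IsProperSubset X K) (hK : K = I ∩ J ∨ K = I ∪ J)
    (u w : List (Finset α)) :
    genProd X (u ++ I :: J :: K :: w) = genProd X (u ++ J :: I :: K :: w) := by
  have hIK : Commute (gen X I) (gen X K) := by
    rcases hK with rfl | rfl
    exacts [(commute_gen_of_subset hK' hI Finset.inter_subset_left).symm,
      commute_gen_of_subset hI hK' Finset.subset_union_left]
  have hJK : Commute (gen X J) (gen X K) := by
    rcases hK with rfl | rfl
    exacts [(commute_gen_of_subset hK' hJ Finset.inter_subset_right).symm,
      commute_gen_of_subset hJ hK' Finset.subset_union_right]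
  have hkill := gen_mul_eq_zero (gen_commutator_mem_splitSupported hI hJ hK)
  simp only [genProd_append, genProd_cons, ← mul_assoc,
    mul_mul_eq_of_commute_of_mul_sub_eq_zero hIK hJK hkill]

lemma genProd_swap {X : Finset α} {S' : Set (Finset α)} (hS' : IsParacell X S')
    {u v : List (Finset α)} {I J : Finset α} (hmem : ∀ A, A ∈ u ++ I :: J :: v ↔ A ∈ S')
    (hsuffix : ∀ u' v', v.Perm v' → (∀ A, A ∈ u' ++ v ↔ A ∈ S') →
      genProd X (u' ++ v) = genProd X (u' ++ v')) :
    genProd X (u ++ I :: J :: v) = genProd X (u ++ J :: I :: v) := by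
  have hIS : I ∈ S' := (hmem I).mp (by simp)
  have hJS : J ∈ S' := (hmem J).mp (by simp)
  have hI := hS'.2.1 I hIS
  have hJ := hS'.2.1 J hJS
  by_cases hIJ : I ⊆ J ∨ J ⊆ I
  · refine genProd_swap_of_commute ?_ u v
    rcases hIJ with h | h
    exacts [commute_gen_of_subset hI hJ h, (commute_gen_of_subset hJ hI h).symm]
  obtain ⟨K, hKS, hK⟩ : ∃ K ∈ S', K = I ∩ J ∨ K = I ∪ J :=
    (hS'.2.2 I hIS J hJS).elim (fun h => ⟨_, h, .inl rfl⟩) (fun h => ⟨_, h, .inr rfl⟩)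
  have hKIJ : K ≠ I ∧ K ≠ J := by
    rcases hK with rfl | rfl <;> simp_all [Finset.inter_eq_left, Finset.inter_eq_right,
      Finset.union_eq_left, Finset.union_eq_right]
  have hKuv : K ∈ u ∨ K ∈ v := by simpa [hKIJ] using (hmem K).mpr hKS
  rcases hKuv with hKu | hKv
  · obtain ⟨u₁, u₂, rfl⟩ := List.append_of_mem hKu
    exact genProd_swap_of_witness_before hI hJ hK u₁ u₂ v
  · have hp := List.perm_cons_erase hKv
    calc genProd X (u ++ I :: J :: v)
        = genProd X (u ++ I :: J :: K :: v.erase K) := by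
          simpa using hsuffix (u ++ [I, J]) _ hp (by simpa using hmem)
      _ = genProd X (u ++ J :: I :: K :: v.erase K) :=
          genProd_swap_of_witness_after hI hJ (hS'.2.1 K hKS) hK u _
      _ = genProd X (u ++ J :: I :: v) := by
          have hmem' : ∀ A, A ∈ (u ++ [J, I]) ++ v ↔ A ∈ S' := fun A => by
            simpa [or_left_comm] using hmem A
          simpa using (hsuffix (u ++ [J, I]) _ hp hmem').symm

lemma genProd_append_perm {X : Finset α} {S' : Set (Finset α)} (hS' : IsParacell X S')
    {v v' : List (Finset α)} (hp : v.Perm v') (u : List (Finset α))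
    (hmem : ∀ A, A ∈ u ++ v ↔ A ∈ S') : genProd X (u ++ v) = genProd X (u ++ v') := by
  suffices ∀ n, ∀ v v' : List (Finset α), v.Perm v' → v.length ≤ n → ∀ u,
      (∀ A, A ∈ u ++ v ↔ A ∈ S') → genProd X (u ++ v) = genProd X (u ++ v') from
    this _ v v' hp le_rfl u hmem
  -- The swap case needs every rearrangement of the shorter tail, which the induction on the
  -- permutation alone does not provide.
  intro n
  induction n using Nat.strong_induction_on with
  | _ n ih =>
  intro v v' hp
  induction hp with
  | nil => intros; rfl
  | cons x _ ihp =>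
    intro hv u hmem
    simpa using ihp (by simp at hv; omega) (u ++ [x]) (by simpa using hmem)
  | swap x y l =>
    intro hv u hmem
    exact genProd_swap hS' hmem fun u' w hw hm =>
      ih l.length (by simp at hv; omega) l w hw le_rfl u' hm
  | trans h₁₂ _ ih₁ ih₂ =>
    intro hv u hmem
    rw [ih₁ hv u hmem, ih₂ (h₁₂.length_eq ▸ hv) u fun A => by
      rw [← hmem, (h₁₂.append_left u).mem_iff]]

theorem prod_one_sub_hatI_perm_general {α : Type*} [DecidableEq α] (X : Finset α)
    (S' : Set (Finset α)) (hS' : IsParacell X S')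
    (l1 l2 : List (Finset α))
    (hmem : ∀ I : Finset α, I ∈ l1 ↔ I ∈ S')
    (hperm : l1.Perm l2) :
    aprod X (l1.map fun I => oneA X - hatI X I) =
      aprod X (l2.map fun I => oneA X - hatI X I) := by
  apply ofCoeff_injective
  rw [ofCoeff_aprod, ofCoeff_aprod]
  exact genProd_append_perm hS' hperm [] hmem

/-- The product `(1−Î_1)⋯(1−Î_N)` over an enumeration of the paracell `S'` does not
depend on the chosen ordering. -/
theorem prod_one_sub_hatI_perm {α : Type*} [DecidableEq α] (X : Finset α)
    (hX : 2 ≤ X.card) (S' : Set (Finset α)) (hS' : IsParacell X S')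
    (l1 l2 : List (Finset α)) (hnd : l1.Nodup)
    (hmem : ∀ I : Finset α, I ∈ l1 ↔ I ∈ S')
    (hperm : l1.Perm l2) :
    aprod X (l1.map fun I => oneA X - hatI X I) =
      aprod X (l2.map fun I => oneA X - hatI X I) :=
  prod_one_sub_hatI_perm_general X S' hS' l1 l2 hmem hperm

end GRF
end

section
/- Let S be a paracell in X with opposite paracell S', and define U_S = Σ_{ν=1}^{|X|} Σ_{(J_1,...,J_ν) ∈ M_ν(S')} (−1)^{ν−1} {J_1,...,J_ν} ∈ A(X), where M_ν(S') is the set of ν-chains associated to S'. Then Î · U_S = 0 for every I ∈ S', and consequently (1−Î)·U_S = U_S for every I ∈ S'. -/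
open scoped Classical

namespace GRF

variable {α : Type*} [DecidableEq α]

/-!
Left multiplication by `Î = {I, X \ I}` cuts every block `J` of a sequence into `J ∩ I` and
`J \ I`, dropping empty pieces. Hence a chain has the same product with `Î` as the chain obtained
by splitting one of its blocks `J` into `J ∩ I, J \ I`, or by merging two consecutive blocks
`J ⊆ I`, `K ⊆ X \ I`. The map `toggle` performs the first such move, a split being allowed only
when the new partial union lies in `S'`, so that the result is again a chain. It is an involution
on chains changing the length by one, and the terms of `Î · U_S` cancel in pairs.

The paracell axiom guarantees that some move is available when `I ∈ S'`. Walking along the chain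
with current partial union `P`, one keeps `P ∪ I ∈ S'`; to pass a block disjoint from `I` one
also keeps an earlier partial union `P₀` with `P₀ ∪ I ∈ S'` but `P₀ ∪ (P ∩ I) ∉ S'` (`GapBelow`),
and the axiom applied to `P₀ ∪ I` and the next partial union keeps the walk going. At the last
block these invariants force a split.
-/

lemma inter_union_sdiff (J I : Finset α) : J ∩ I ∪ J \ I = J := sup_inf_sdiff J I

lemma subset_foldr_union_of_mem {J : Finset α} {L : List (Finset α)} (h : J ∈ L) :
    J ⊆ L.foldr (· ∪ ·) ∅ := by
  induction L with
  | nil => simp at h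
  | cons K L ih =>
    rcases List.mem_cons.1 h with rfl | h
    · exact Finset.subset_union_left
    · exact (ih h).trans Finset.subset_union_right

lemma inter_foldr_union_eq_empty {J : Finset α} {L : List (Finset α)} :
    J ∩ L.foldr (· ∪ ·) ∅ = ∅ ↔ ∀ K ∈ L, J ∩ K = ∅ := by
  induction L with
  | nil => simp
  | cons K L ih => simp [Finset.inter_union_distrib_left, Finset.union_eq_empty, ih]

lemma pairwise_cons_iff {J : Finset α} {L : List (Finset α)} :
    (J :: L).Pairwise (fun A B => A ∩ B = ∅) ↔
      J ∩ L.foldr (· ∪ ·) ∅ = ∅ ∧ L.Pairwise (fun A B => A ∩ B = ∅) := by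
  rw [List.pairwise_cons, inter_foldr_union_eq_empty]

lemma IsProperSeq.subset {X J : Finset α} {L : List (Finset α)} (hL : IsProperSeq X L)
    (hJ : J ∈ L) : J ⊆ X :=
  hL.2.2.2 ▸ subset_foldr_union_of_mem hJ

lemma IsParacell.opp {X : Finset α} {S : Set (Finset α)} (hS : IsParacell X S) :
    IsParacell X (opp X S) := by
  obtain ⟨⟨J, hJ⟩, hproper, hclosed⟩ := hS
  refine ⟨⟨X \ J, Finset.sdiff_subset, ?_⟩, ?_, ?_⟩
  · rwa [Finset.sdiff_sdiff_eq_self (hproper J hJ).1]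
  · rintro A ⟨hAX, hA⟩
    obtain ⟨-, hne, hnX⟩ := hproper _ hA
    refine ⟨hAX, ?_, ?_⟩ <;> rintro rfl <;> simp at hne hnX
  · rintro A ⟨hAX, hA⟩ B ⟨hBX, hB⟩
    rcases hclosed _ hA _ hB with h | h
    · exact .inr ⟨Finset.union_subset hAX hBX, by rwa [Finset.sdiff_union_distrib]⟩
    · exact .inl ⟨Finset.inter_subset_left.trans hAX, by rwa [Finset.sdiff_inter_distrib_right]⟩

def PartialUnionsIn (S' : Set (Finset α)) : Finset α → List (Finset α) → Prop
  | _, [] => True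
  | _, [_] => True
  | P, J :: K :: L => P ∪ J ∈ S' ∧ PartialUnionsIn S' (P ∪ J) (K :: L)

lemma partialUnionsIn_iff {S' : Set (Finset α)} {P : Finset α} {L : List (Finset α)} :
    PartialUnionsIn S' P L ↔
      ∀ r, 0 < r → r < L.length → P ∪ (L.take r).foldr (· ∪ ·) ∅ ∈ S' := by
  induction L generalizing P with
  | nil => simp [PartialUnionsIn]
  | cons J L ih =>
    cases L with
    | nil => simp only [PartialUnionsIn, List.length_singleton, true_iff]; omega
    | cons K L =>
      simp only [PartialUnionsIn, ih, List.length_cons]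
      constructor
      · rintro ⟨hJ, h⟩ (_ | _ | r) h0 hr
        · omega
        · simpa using hJ
        · simpa [Finset.union_assoc] using h (r + 1) (by omega) (by omega)
      · intro h
        refine ⟨by simpa using h 1 (by omega) (by omega), fun r h0 hr => ?_⟩
        obtain ⟨r, rfl⟩ := Nat.exists_eq_add_of_lt h0
        simpa [Finset.union_assoc] using h (r + 2) (by omega) (by omega)

lemma isChainFor_iff {X : Finset α} {S' : Set (Finset α)} {L : List (Finset α)} :
    IsChainFor X S' L ↔ IsProperSeq X L ∧ PartialUnionsIn S' ∅ L := by
  simp [IsChainFor, partialUnionsIn_iff]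

section Toggle

variable (I : Finset α) (S' : Set (Finset α))

def CanSplit (P J : Finset α) : Prop := ¬Disjoint J I ∧ ¬J ⊆ I ∧ P ∪ J ∩ I ∈ S'

noncomputable def toggle : Finset α → List (Finset α) → List (Finset α)
  | _, [] => []
  | P, [J] => if CanSplit I S' P J then [J ∩ I, J \ I] else [J]
  | P, J :: K :: L =>
    if CanSplit I S' P J then J ∩ I :: J \ I :: K :: L
    else if J ⊆ I ∧ Disjoint K I then (J ∪ K) :: L
    else J :: toggle (P ∪ J) (K :: L)

def GapBelow (P : Finset α) : Prop := ∃ P₀ ⊆ P, P₀ ∪ I ∈ S' ∧ P₀ ∪ P ∩ I ∉ S'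

variable {I S'} {P J K : Finset α} {L : List (Finset α)}

lemma toggle_cons_of_canSplit (h : CanSplit I S' P J) (L : List (Finset α)) :
    toggle I S' P (J :: L) = J ∩ I :: J \ I :: L := by
  cases L <;> simp [toggle, h]

lemma toggle_cons_cons_of_subset_of_disjoint (hJ : J ⊆ I) (hK : Disjoint K I)
    (L : List (Finset α)) : toggle I S' P (J :: K :: L) = (J ∪ K) :: L := by
  simp [toggle, CanSplit, hJ, hK]

lemma toggle_singleton (h : ¬CanSplit I S' P J) : toggle I S' P [J] = [J] := by
  simp [toggle, h]

lemma toggle_cons_cons (hs : ¬CanSplit I S' P J) (hm : ¬(J ⊆ I ∧ Disjoint K I))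
    (L : List (Finset α)) : toggle I S' P (J :: K :: L) = J :: toggle I S' (P ∪ J) (K :: L) := by
  rw [toggle, if_neg hs, if_neg hm]

/- A move never changes whether the first block meets `I`, so it cannot create or destroy a
merge with the block in front of it: this is why `toggle` is an involution. -/
lemma exists_toggle_cons (P K : Finset α) (L : List (Finset α)) :
    ∃ K' L', toggle I S' P (K :: L) = K' :: L' ∧ K' ∩ I = K ∩ I := by
  by_cases hs : CanSplit I S' P K
  · exact ⟨_, _, toggle_cons_of_canSplit hs L, by simp [Finset.inter_assoc]⟩
  cases L with
  | nil => exact ⟨_, _, toggle_singleton hs, rfl⟩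
  | cons K₂ L =>
    by_cases hm : K ⊆ I ∧ Disjoint K₂ I
    · refine ⟨_, _, toggle_cons_cons_of_subset_of_disjoint hm.1 hm.2 L, ?_⟩
      rw [Finset.union_inter_distrib_right, Finset.disjoint_iff_inter_eq_empty.1 hm.2,
        Finset.union_empty]
    · exact ⟨_, _, toggle_cons_cons hs hm L, rfl⟩

@[simp]
lemma foldr_union_toggle (P : Finset α) (L : List (Finset α)) :
    (toggle I S' P L).foldr (· ∪ ·) ∅ = L.foldr (· ∪ ·) ∅ := by
  induction L generalizing P with
  | nil => rfl
  | cons J L ih =>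
    by_cases hs : CanSplit I S' P J
    · simp [toggle_cons_of_canSplit hs, ← Finset.union_assoc, inter_union_sdiff]
    cases L with
    | nil => rw [toggle_singleton hs]
    | cons K L =>
      by_cases hm : J ⊆ I ∧ Disjoint K I
      · simp [toggle_cons_cons_of_subset_of_disjoint hm.1 hm.2, Finset.union_assoc]
      · simp [toggle_cons_cons hs hm, ih]

lemma ne_empty_of_mem_toggle (hL : ∀ J ∈ L, J ≠ ∅) : ∀ J ∈ toggle I S' P L, J ≠ ∅ := by
  induction L generalizing P with
  | nil => simp [toggle]
  | cons J L ih =>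
    simp only [List.mem_cons, forall_eq_or_imp] at hL
    by_cases hs : CanSplit I S' P J
    · simp only [toggle_cons_of_canSplit hs, List.mem_cons, forall_eq_or_imp,
        ← Finset.nonempty_iff_ne_empty]
      exact ⟨Finset.not_disjoint_iff_nonempty_inter.1 hs.1, Finset.sdiff_nonempty.2 hs.2.1,
        fun K hK => Finset.nonempty_iff_ne_empty.2 (hL.2 K hK)⟩
    cases L with
    | nil => simpa [toggle_singleton hs] using hL.1
    | cons K L =>
      by_cases hm : J ⊆ I ∧ Disjoint K I
      · simp only [toggle_cons_cons_of_subset_of_disjoint hm.1 hm.2, List.mem_cons,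
          forall_eq_or_imp]
        exact ⟨by simp [hL.1], fun K' hK' => hL.2 K' (List.mem_cons_of_mem _ hK')⟩
      · simp only [toggle_cons_cons hs hm, List.mem_cons, forall_eq_or_imp]
        exact ⟨hL.1, ih hL.2⟩

lemma pairwise_toggle (hL : L.Pairwise (fun A B => A ∩ B = ∅)) :
    (toggle I S' P L).Pairwise (fun A B => A ∩ B = ∅) := by
  induction L generalizing P with
  | nil => simp [toggle]
  | cons J L ih =>
    rw [pairwise_cons_iff] at hL
    by_cases hs : CanSplit I S' P J
    · rw [toggle_cons_of_canSplit hs, pairwise_cons_iff, pairwise_cons_iff]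
      refine ⟨?_, ?_, hL.2⟩ <;> ext x <;> have := Finset.ext_iff.1 hL.1 x <;>
        simp at this ⊢ <;> tauto
    cases L with
    | nil => rwa [toggle_singleton hs, pairwise_cons_iff]
    | cons K L =>
      rw [pairwise_cons_iff] at hL
      by_cases hm : J ⊆ I ∧ Disjoint K I
      · rw [toggle_cons_cons_of_subset_of_disjoint hm.1 hm.2, pairwise_cons_iff]
        simp only [List.foldr_cons, Finset.inter_union_distrib_left,
          Finset.union_inter_distrib_right, Finset.union_eq_empty] at hL ⊢
        exact ⟨⟨hL.1.2, hL.2.1⟩, hL.2.2⟩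
      · rw [toggle_cons_cons hs hm, pairwise_cons_iff, foldr_union_toggle]
        exact ⟨hL.1, ih (pairwise_cons_iff.2 hL.2)⟩

lemma partialUnionsIn_toggle (hL : PartialUnionsIn S' P L) :
    PartialUnionsIn S' P (toggle I S' P L) := by
  induction L generalizing P with
  | nil => trivial
  | cons J L ih =>
    by_cases hs : CanSplit I S' P J
    · rw [toggle_cons_of_canSplit hs]
      refine ⟨hs.2.2, ?_⟩
      cases L with
      | nil => trivial
      | cons K L => rwa [PartialUnionsIn, Finset.union_assoc, inter_union_sdiff]
    cases L with
    | nil => rwa [toggle_singleton hs]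
    | cons K L =>
      by_cases hm : J ⊆ I ∧ Disjoint K I
      · rw [toggle_cons_cons_of_subset_of_disjoint hm.1 hm.2]
        cases L with
        | nil => trivial
        | cons K₂ L => simpa [PartialUnionsIn, Finset.union_assoc] using hL.2
      · obtain ⟨K', L', hKL, -⟩ := exists_toggle_cons (I := I) (S' := S') (P ∪ J) K L
        have h := ih hL.2
        rw [hKL] at h
        rw [toggle_cons_cons hs hm, hKL]
        exact ⟨hL.1, h⟩

lemma toggle_toggle (hne : ∀ J ∈ L, J ≠ ∅) (hL : PartialUnionsIn S' P L) :
    toggle I S' P (toggle I S' P L) = L := by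
  induction L generalizing P with
  | nil => rfl
  | cons J L ih =>
    by_cases hs : CanSplit I S' P J
    · rw [toggle_cons_of_canSplit hs, toggle_cons_cons_of_subset_of_disjoint
        Finset.inter_subset_right Finset.sdiff_disjoint, inter_union_sdiff]
    cases L with
    | nil => rw [toggle_singleton hs, toggle_singleton hs]
    | cons K L =>
      by_cases hm : J ⊆ I ∧ Disjoint K I
      · have hJ : (J ∪ K) ∩ I = J := by
          rw [Finset.union_inter_distrib_right, Finset.inter_eq_left.2 hm.1,
            Finset.disjoint_iff_inter_eq_empty.1 hm.2, Finset.union_empty]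
        have hK : (J ∪ K) \ I = K := by
          rw [Finset.union_sdiff_distrib, Finset.sdiff_eq_empty_iff_subset.2 hm.1,
            Finset.empty_union, hm.2.sdiff_eq_left]
        have hs' : CanSplit I S' P (J ∪ K) := by
          refine ⟨?_, ?_, by simpa [hJ] using hL.1⟩
          · rw [Finset.disjoint_iff_inter_eq_empty, hJ]
            exact hne J List.mem_cons_self
          · rw [← Finset.sdiff_eq_empty_iff_subset, hK]
            exact hne K (by simp)
        rw [toggle_cons_cons_of_subset_of_disjoint hm.1 hm.2, toggle_cons_of_canSplit hs', hJ, hK]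
      · obtain ⟨K', L', hKL, hK'⟩ := exists_toggle_cons (I := I) (S' := S') (P ∪ J) K L
        have hm' : ¬(J ⊆ I ∧ Disjoint K' I) := by
          simpa [Finset.disjoint_iff_inter_eq_empty, hK'] using hm
        rw [toggle_cons_cons hs hm, hKL, toggle_cons_cons hs hm', ← hKL,
          ih (fun J' hJ' => hne J' (List.mem_cons_of_mem _ hJ')) hL.2]

lemma length_toggle (h : toggle I S' P L ≠ L) :
    (toggle I S' P L).length = L.length + 1 ∨ (toggle I S' P L).length + 1 = L.length := by
  induction L generalizing P with
  | nil => exact absurd rfl h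
  | cons J L ih =>
    by_cases hs : CanSplit I S' P J
    · simp [toggle_cons_of_canSplit hs]
    cases L with
    | nil => exact absurd (toggle_singleton hs) h
    | cons K L =>
      by_cases hm : J ⊆ I ∧ Disjoint K I
      · simp [toggle_cons_cons_of_subset_of_disjoint hm.1 hm.2]
      · rw [toggle_cons_cons hs hm] at h ⊢
        simpa using ih fun h' => h (by rw [h'])

lemma GapBelow.union_mem (hclosed : ∀ A ∈ S', ∀ B ∈ S', A ∩ B ∈ S' ∨ A ∪ B ∈ S')
    (h : GapBelow I S' P) (hP : P ∈ S') : P ∪ I ∈ S' := by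
  obtain ⟨P₀, hP₀, hP₀I, hgap⟩ := h
  have hinter : (P₀ ∪ I) ∩ P = P₀ ∪ P ∩ I := by
    ext x; have := @hP₀ x; simp only [Finset.mem_inter, Finset.mem_union]; tauto
  have hunion : P₀ ∪ I ∪ P = P ∪ I := by
    ext x; have := @hP₀ x; simp only [Finset.mem_union]; tauto
  rw [← hunion]
  exact (hclosed _ hP₀I _ hP).resolve_left (hinter ▸ hgap)

lemma gapBelow_union (hPI : P ∪ I ∈ S') (hgap : Disjoint J I → GapBelow I S' P)
    (hs : ¬CanSplit I S' P J) (hJI : ¬J ⊆ I) : GapBelow I S' (P ∪ J) := by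
  by_cases hJ : Disjoint J I
  · obtain ⟨P₀, hP₀, hP₀I, hP₀P⟩ := hgap hJ
    have := Finset.disjoint_left.1 hJ
    refine ⟨P₀, hP₀.trans Finset.subset_union_left, hP₀I, ?_⟩
    rwa [show (P ∪ J) ∩ I = P ∩ I by grind]
  · refine ⟨P, Finset.subset_union_left, hPI, ?_⟩
    rw [show P ∪ (P ∪ J) ∩ I = P ∪ J ∩ I by grind]
    exact fun h => hs ⟨hJ, hJI, h⟩

lemma canSplit_of_union_eq {X : Finset α} (hX : X ∉ S') (hIX : I ⊆ X) (hcover : P ∪ J = X)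
    (hPI : P ∪ I ∈ S') (hgap : Disjoint J I → GapBelow I S' P) : CanSplit I S' P J := by
  by_cases hJ : Disjoint J I
  · obtain ⟨P₀, -, hP₀I, hP₀P⟩ := hgap hJ
    have := Finset.disjoint_left.1 hJ
    exact absurd (by rwa [show P ∩ I = I by grind]) hP₀P
  by_cases hJI : J ⊆ I
  · exact absurd (by rwa [show P ∪ I = X by grind] at hPI) hX
  · exact ⟨hJ, hJI, by rwa [show P ∪ J ∩ I = P ∪ I by grind]⟩

lemma toggle_ne_self (hclosed : ∀ A ∈ S', ∀ B ∈ S', A ∩ B ∈ S' ∨ A ∪ B ∈ S')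
    {X : Finset α} (hX : X ∉ S') (hIX : I ⊆ X) (hcover : P ∪ L.foldr (· ∪ ·) ∅ = X)
    (hL : PartialUnionsIn S' P L) (hPI : P ∪ I ∈ S')
    (hgap : ∀ J ∈ L.head?, Disjoint J I → GapBelow I S' P) :
    toggle I S' P L ≠ L := by
  induction L generalizing P with
  | nil =>
    rw [List.foldr_nil, Finset.union_empty] at hcover
    subst hcover
    exact absurd (by rwa [Finset.union_eq_left.2 hIX] at hPI) hX
  | cons J L ih =>
    by_cases hs : CanSplit I S' P J
    · simp [toggle_cons_of_canSplit hs]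
    cases L with
    | nil =>
      rw [List.foldr_cons, List.foldr_nil, Finset.union_empty] at hcover
      exact absurd (canSplit_of_union_eq hX hIX hcover hPI (hgap J rfl)) hs
    | cons K L =>
      by_cases hm : J ⊆ I ∧ Disjoint K I
      · simp [toggle_cons_cons_of_subset_of_disjoint hm.1 hm.2]
      rw [toggle_cons_cons hs hm, Ne, List.cons.injEq, not_and]
      obtain ⟨hPJ, hL⟩ := hL
      have hgap' : ¬J ⊆ I → GapBelow I S' (P ∪ J) := gapBelow_union hPI (hgap J rfl) hs
      refine fun _ => ih (by simpa [Finset.union_assoc] using hcover) hL ?_ ?_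
      · by_cases hJI : J ⊆ I
        · rwa [Finset.union_assoc, Finset.union_eq_right.2 hJI]
        · exact (hgap' hJI).union_mem hclosed hPJ
      · rintro _ ⟨⟩ hK
        exact hgap' fun hJI => hm ⟨hJI, hK⟩

lemma IsProperSeq.toggle {X : Finset α} (hL : IsProperSeq X L) :
    IsProperSeq X (toggle I S' P L) := by
  obtain ⟨hnil, hne, hpw, hcover⟩ := hL
  obtain ⟨J, L, rfl⟩ := List.exists_cons_of_ne_nil hnil
  obtain ⟨J', L', hJL, -⟩ := exists_toggle_cons (I := I) (S' := S') P J L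
  exact ⟨by simp [hJL], ne_empty_of_mem_toggle hne, pairwise_toggle hpw,
    by rwa [foldr_union_toggle]⟩

end Toggle

section Chain

variable {X I : Finset α} {S' : Set (Finset α)} {L : List (Finset α)}

lemma isChainFor_toggle (hL : IsChainFor X S' L) : IsChainFor X S' (toggle I S' ∅ L) := by
  rw [isChainFor_iff] at hL ⊢
  exact ⟨hL.1.toggle, partialUnionsIn_toggle hL.2⟩

lemma toggle_toggle_of_isChainFor (hL : IsChainFor X S' L) :
    toggle I S' ∅ (toggle I S' ∅ L) = L :=
  toggle_toggle hL.1.2.1 (isChainFor_iff.1 hL).2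

lemma toggle_ne_self_of_isChainFor (hS' : IsParacell X S') (hI : I ∈ S')
    (hL : IsChainFor X S' L) : toggle I S' ∅ L ≠ L := by
  obtain ⟨-, hproper, hclosed⟩ := hS'
  have hempty : (∅ : Finset α) ∉ S' := fun h => (hproper ∅ h).2.1 rfl
  refine toggle_ne_self hclosed (fun h => (hproper X h).2.2 rfl) (hproper I hI).1
    (by rw [Finset.empty_union, hL.1.2.2.2]) (isChainFor_iff.1 hL).2 (by rwa [Finset.empty_union])
    fun _ _ _ => ⟨∅, le_rfl, by rwa [Finset.empty_union], by simpa using hempty⟩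

end Chain

lemma seqMul_cons_right (a : List (Finset α)) (J : Finset α) (L : List (Finset α)) :
    seqMul a (J :: L) = seqMul a [J] ++ seqMul a L := by
  simp [seqMul, List.filter_append]

lemma seqMul_singleton_left {X : Finset α} {L : List (Finset α)}
    (hL : ∀ J ∈ L, J ⊆ X ∧ J ≠ ∅) : seqMul [X] L = L := by
  induction L with
  | nil => rfl
  | cons J L ih =>
    simp only [List.mem_cons, forall_eq_or_imp] at hL
    rw [seqMul_cons_right, ih hL.2]
    simp [seqMul, Finset.inter_eq_right.2 hL.1.1, hL.1.2]

lemma seqMul_hatI_inter_append_sdiff {X I J : Finset α} (hJ : J ⊆ X) :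
    seqMul [I, X \ I] [J ∩ I] ++ seqMul [I, X \ I] [J \ I] = seqMul [I, X \ I] [J] := by
  have h₁ : I ∩ (J ∩ I) = J ∩ I := by grind
  have h₂ : X \ I ∩ (J ∩ I) = ∅ := by grind
  have h₃ : I ∩ (J \ I) = ∅ := by grind
  have h₄ : X \ I ∩ (J \ I) = J \ I := by grind
  have h₅ : X \ I ∩ J = J \ I := by grind
  simp [seqMul, h₁, h₂, h₃, h₄, h₅, Finset.inter_comm I J, List.filter_cons]
  split_ifs <;> simp

lemma seqMul_hatI_toggle {X I P : Finset α} {S' : Set (Finset α)} {L : List (Finset α)}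
    (hL : ∀ J ∈ L, J ⊆ X) : seqMul [I, X \ I] (toggle I S' P L) = seqMul [I, X \ I] L := by
  induction L generalizing P with
  | nil => rfl
  | cons J L ih =>
    simp only [List.mem_cons, forall_eq_or_imp] at hL
    by_cases hs : CanSplit I S' P J
    · rw [toggle_cons_of_canSplit hs, seqMul_cons_right, seqMul_cons_right _ (J \ I),
        ← List.append_assoc, seqMul_hatI_inter_append_sdiff hL.1, ← seqMul_cons_right]
    cases L with
    | nil => rw [toggle_singleton hs]
    | cons K L =>
      by_cases hm : J ⊆ I ∧ Disjoint K I
      · have hJ : (J ∪ K) ∩ I = J := by have := Finset.disjoint_left.1 hm.2; grind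
        have hK : (J ∪ K) \ I = K := by have := Finset.disjoint_left.1 hm.2; grind
        have hJK : J ∪ K ⊆ X := Finset.union_subset hL.1 (hL.2 K List.mem_cons_self)
        rw [toggle_cons_cons_of_subset_of_disjoint hm.1 hm.2, seqMul_cons_right,
          seqMul_cons_right _ J, seqMul_cons_right _ K, ← List.append_assoc,
          ← seqMul_hatI_inter_append_sdiff hJK, hJ, hK]
      · rw [toggle_cons_cons hs hm, seqMul_cons_right, ih hL.2, ← seqMul_cons_right]

lemma amul_single_one_left (a : List (Finset α)) (y : AX α) :
    amul (Finsupp.single a 1) y = y.sum fun b cb => Finsupp.single (seqMul a b) cb := by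
  rw [amul, Finsupp.sum_single_index (by simp)]
  simp only [one_mul]

lemma amul_sub_left (x y z : AX α) : amul (x - y) z = amul x z - amul y z := by
  unfold amul
  refine Finsupp.sum_sub_index fun a c₁ c₂ => ?_
  rw [← Finsupp.sum_sub]
  exact Finsupp.sum_congr fun b _ => by rw [sub_mul, Finsupp.single_sub]

lemma amul_oneA_left {X : Finset α} {x : AX α}
    (hx : ∀ c ∈ x.support, ∀ J ∈ c, J ⊆ X ∧ J ≠ ∅) : amul (oneA X) x = x := by
  rw [oneA, amul_single_one_left]
  conv_rhs => rw [← Finsupp.sum_single x]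
  exact Finsupp.sum_congr fun c hc => by rw [seqMul_singleton_left (hx c hc)]

section US

variable [Fintype α] {X I : Finset α} {S' : Set (Finset α)}

lemma US_apply (L : List (Finset α)) :
    US X S' L = if IsChainFor X S' L then (-1 : ℂ) ^ (L.length - 1) else 0 :=
  congrFun Finsupp.ofSupportFinite_coe L

lemma mem_support_US {L : List (Finset α)} : L ∈ (US X S').support ↔ IsChainFor X S' L := by
  rw [Finsupp.mem_support_iff, US_apply]
  split_ifs with h <;> simp [h]

lemma amul_oneA_US : amul (oneA X) (US X S') = US X S' :=
  amul_oneA_left fun _ hL J hJ =>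
    ⟨(mem_support_US.1 hL).1.subset hJ, (mem_support_US.1 hL).1.2.1 J hJ⟩

theorem amul_hatI_US_eq_zero (hS' : IsParacell X S') (hI : I ∈ S') :
    amul (hatI X I) (US X S') = 0 := by
  rw [hatI, amul_single_one_left, Finsupp.sum]
  refine Finset.sum_involution (fun L _ => toggle I S' ∅ L) (fun L hL => ?_)
    (fun L hL _ => toggle_ne_self_of_isChainFor hS' hI (mem_support_US.1 hL))
    (fun L hL => mem_support_US.2 (isChainFor_toggle (mem_support_US.1 hL)))
    (fun L hL => toggle_toggle_of_isChainFor (mem_support_US.1 hL))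
  have hL := mem_support_US.1 hL
  rw [seqMul_hatI_toggle fun J hJ => hL.1.subset hJ, ← Finsupp.single_add, US_apply, US_apply,
    if_pos hL, if_pos (isChainFor_toggle hL), Finsupp.single_eq_zero]
  obtain ⟨m, hm⟩ := Nat.exists_eq_add_of_lt (List.length_pos_of_ne_nil hL.1.1)
  obtain ⟨k, hk⟩ := Nat.exists_eq_add_of_lt
    (List.length_pos_of_ne_nil (isChainFor_toggle (I := I) hL).1.1)
  have hlen := length_toggle (toggle_ne_self_of_isChainFor hS' hI hL)
  rw [hm, hk] at hlen ⊢
  obtain rfl | rfl : k = m + 1 ∨ m = k + 1 := by omega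
  all_goals simp only [zero_add, Nat.add_sub_cancel]; ring

end US

theorem hatI_mul_US_general {α : Type*} [DecidableEq α] [Fintype α] (X : Finset α)
    (S : Set (Finset α)) (hS : IsParacell X S) :
    ∀ I ∈ opp X S,
      amul (hatI X I) (US X (opp X S)) = 0 ∧
      amul (oneA X - hatI X I) (US X (opp X S)) = US X (opp X S) := by
  intro I hI
  have hvanish := amul_hatI_US_eq_zero hS.opp hI
  exact ⟨hvanish, by rw [amul_sub_left, amul_oneA_US, hvanish, sub_zero]⟩

/-- `Î · U_S = 0` for every `I ∈ S'`, and consequently `(1−Î)·U_S = U_S`. -/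
theorem hatI_mul_US {α : Type*} [DecidableEq α] [Fintype α] (X : Finset α)
    (hX : 2 ≤ X.card) (S : Set (Finset α)) (hS : IsParacell X S) :
    ∀ I ∈ opp X S,
      amul (hatI X I) (US X (opp X S)) = 0 ∧
      amul (oneA X - hatI X I) (US X (opp X S)) = US X (opp X S) :=
  hatI_mul_US_general X S hS

end GRF
end
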